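/- For every real z ≠ 0 and every integer ℓ ≥ 0: Σ_{k=0}^{ℓ} (2k+1)[j_k(z)]² = −z²[j_ℓ(z)]² − z²[j_{ℓ+1}(z)]² + 2(ℓ+1)·z·j_ℓ(z)·j_{ℓ+1}(z) + 1. -/

import Mathlib

open Finset

/-- Auxiliary: `sphjAux z n` is the spherical Bessel function `j_{n-1}(z)`. -/
noncomputable def sphjAux (z : ℝ) : ℕ → ℝ
  | 0 => Real.cos z / z
  | 1 => Real.sin z / z
  | (n + 2) => ((2 * (n : ℝ) + 1) / z) * sphjAux z (n + 1) - sphjAux z n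

/-- The spherical Bessel function `j_k(z)` for integer `k ≥ -1`. -/
noncomputable def sphj (k : ℤ) (z : ℝ) : ℝ := sphjAux z (k + 1).toNat

lemma sphj_nat (z : ℝ) (n : ℕ) : sphj n z = sphjAux z (n + 1) := by
  have : ((n : ℤ) + 1).toNat = n + 1 := by omega
  simp [sphj, this]

lemma sphj_nat_cast (z : ℝ) (n : ℕ) : sphj ((n : ℤ) + 1) z = sphjAux z (n + 2) := by
  have : ((n : ℤ) + 1 + 1).toNat = n + 2 := by omega
  simp [sphj, this]

lemma sphj_nat_cast2 (z : ℝ) (n : ℕ) : sphj ((n : ℤ) + 1 + 1) z = sphjAux z (n + 3) := by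
  have : ((n : ℤ) + 1 + 1 + 1).toNat = n + 3 := by omega
  simp [sphj, this]

lemma sphjAux_rec (z : ℝ) (n : ℕ) :
    sphjAux z (n + 2) = ((2 * (n : ℝ) + 1) / z) * sphjAux z (n + 1) - sphjAux z n := rfl

/-- Sum rule `∑_{k=0}^{ℓ} (2k+1)[j_k(z)]² = -z²[j_ℓ]² - z²[j_{ℓ+1}]² + 2(ℓ+1)z j_ℓ j_{ℓ+1} + 1`. -/
theorem sum_rule_2kp1 (z : ℝ) (hz : z ≠ 0) (ℓ : ℕ) :
    ∑ k ∈ Finset.range (ℓ + 1), (2 * (k : ℝ) + 1) * (sphj k z) ^ 2 =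
      -z ^ 2 * (sphj ℓ z) ^ 2 - z ^ 2 * (sphj (ℓ + 1) z) ^ 2 +
        2 * ((ℓ : ℝ) + 1) * z * sphj ℓ z * sphj (ℓ + 1) z + 1 := by
  induction ℓ with
  | zero =>
    rw [Finset.sum_range_one, sphj_nat z 0, sphj_nat_cast z 0]
    norm_num
    have h0 : sphjAux z 0 = Real.cos z / z := rfl
    have h1 : sphjAux z 1 = Real.sin z / z := rfl
    have h2 : sphjAux z 2 = (1/z) * sphjAux z 1 - sphjAux z 0 := by
      rw [sphjAux_rec z 0]; norm_num
    have hpyth : Real.sin z ^ 2 + Real.cos z ^ 2 = 1 := Real.sin_sq_add_cos_sq z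
    rw [h2, h0, h1]
    field_simp
    linear_combination z ^ 2 * hpyth
  | succ n ih =>
    rw [Finset.sum_range_succ, ih]
    push_cast [sphj_nat, sphj_nat_cast, sphj_nat_cast2]
    rw [sphjAux_rec z (n+1), sphjAux_rec z n]
    set a := sphjAux z n
    set b := sphjAux z (n+1)
    field_simp
    push_cast
    ring
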